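/- arXiv:1411.3378 — 8 statements merged into one kernel-verified Lean document; each statement's English description precedes it below -/
import Mathlib

section
/- Let (X,d) be a quasi-pseudometric space, φ : X → ℝ bounded from above, and ⪯ the preorder induced by φ. If (xₙ) is a sequence in X with xₙ ⪯ xₙ₊₁ for all n, then (xₙ) is left K-Cauchy, i.e., for every ε > 0 there exists n₀ such that for all n₀ ≤ k ≤ n, d(x_k, xₙ) < ε. -/
/-- If `φ` is bounded above and `(xₙ)` is nondecreasing for the preorder
induced by `φ`, then `(xₙ)` is left K-Cauchy. -/
theorem monotone_seq_left_K_Cauchy {X : Type*} (d : X → X → ℝ) (φ : X → ℝ)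
    (hnn : ∀ x y, 0 ≤ d x y) (hrefl : ∀ x, d x x = 0)
    (htri : ∀ x y z, d x z ≤ d x y + d y z)
    (hbdd : ∃ M : ℝ, ∀ x, φ x ≤ M)
    (x : ℕ → X) (hmono : ∀ n, d (x n) (x (n + 1)) ≤ φ (x (n + 1)) - φ (x n)) :
    ∀ ε > (0 : ℝ), ∃ n₀ : ℕ, ∀ k n : ℕ, n₀ ≤ k → k ≤ n → d (x k) (x n) < ε := by
  -- key estimate: d (x k) (x n) ≤ φ (x n) - φ (x k) for k ≤ n
  have key : ∀ k n : ℕ, k ≤ n → d (x k) (x n) ≤ φ (x n) - φ (x k) := by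
    intro k n hkn
    induction n with
    | zero =>
      have : k = 0 := Nat.le_zero.mp hkn
      subst this; simp [hrefl]
    | succ n ih =>
      rcases Nat.lt_or_ge k (n + 1) with h | h
      · have hk : k ≤ n := Nat.lt_succ_iff.mp h
        calc d (x k) (x (n+1)) ≤ d (x k) (x n) + d (x n) (x (n+1)) := htri _ _ _
          _ ≤ (φ (x n) - φ (x k)) + (φ (x (n+1)) - φ (x n)) :=
            add_le_add (ih hk) (hmono n)
          _ = φ (x (n+1)) - φ (x k) := by ring
      · have : k = n + 1 := le_antisymm hkn h
        subst this; simp [hrefl]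
  -- φ ∘ x is monotone
  have mono : Monotone fun n => φ (x n) := by
    apply monotone_nat_of_le_succ
    intro n
    have := (hnn (x n) (x (n+1))).trans (hmono n)
    linarith
  obtain ⟨M, hM⟩ := hbdd
  have hbdd' : BddAbove (Set.range fun n => φ (x n)) := ⟨M, by rintro _ ⟨n, rfl⟩; exact hM _⟩
  have htend := tendsto_atTop_ciSup mono hbdd'
  set L := ⨆ n, φ (x n) with hL
  intro ε hε
  obtain ⟨n₀, hn₀⟩ := (htend.eventually (eventually_gt_nhds (by linarith : L - ε/2 < L))).exists
  refine ⟨n₀, fun k n hk hkn => ?_⟩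
  have hφk : L - ε/2 ≤ φ (x k) := le_trans hn₀.le (mono hk)
  have hφn : φ (x n) ≤ L := le_ciSup hbdd' n
  calc d (x k) (x n) ≤ φ (x n) - φ (x k) := key k n hkn
    _ ≤ ε/2 := by linarith
    _ < ε := by linarith
end

section
/- Let (X,d) be a Hausdorff left K-complete T₀-quasi-pseudometric space, φ : X → ℝ bounded from above, and ⪯ the preorder induced by φ (x ⪯ y iff d(x,y) ≤ φ(y) − φ(x)). Let F : X × X → X be preorder-preserving (x ⪯ z and y ⪯ w implies F(x,y) ⪯ F(z,w)) and d-sequentially continuous. If there exist x₀, y₀ ∈ X with x₀ ⪯ F(x₀,y₀) and y₀ ⪯ F(y₀,x₀), then F has a coupled fixed point: there exist x*, y* ∈ X with F(x*,y*) = x* and F(y*,x*) = y*. -/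
/-!
Iterate `(x, y) ↦ (F x y, F y x)` from `(x₀, y₀)`. Monotonicity of `F` propagates the starting
relations, so both coordinate sequences are increasing for the preorder induced by `φ`. Along
such a sequence `d (uₖ) (uₙ) ≤ φ (uₙ) - φ (uₖ)`, and `φ (uₙ)` is a bounded increasing real
sequence, hence Cauchy; so both sequences are left K-Cauchy and converge, to `a` and `b` say.
By continuity the shifted sequences also converge to `F a b` and `F b a`, and uniqueness of
limits gives `F a b = a` and `F b a = b`.
-/

open Filter

section QuasiPseudometric

variable {X : Type*} (d : X → X → ℝ) (φ : X → ℝ)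

/-- The preorder `x ⪯ y` induced by `φ`. -/
def Precedes (x y : X) : Prop := d x y ≤ φ y - φ x

def IsLeftKCauchy (u : ℕ → X) : Prop :=
  ∀ ε > (0 : ℝ), ∃ n₀, ∀ k n, n₀ ≤ k → k ≤ n → d (u k) (u n) < ε

variable {d φ}

theorem Precedes.trans (htri : ∀ x y z, d x z ≤ d x y + d y z) {x y z : X}
    (hxy : Precedes d φ x y) (hyz : Precedes d φ y z) : Precedes d φ x z := by
  unfold Precedes at *
  linarith [htri x y z]

theorem Precedes.le (hnn : ∀ x y, 0 ≤ d x y) {x y : X} (h : Precedes d φ x y) : φ x ≤ φ y := by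
  unfold Precedes at h
  linarith [hnn x y]

theorem precedes_of_precedes_succ (hrefl : ∀ x, d x x = 0)
    (htri : ∀ x y z, d x z ≤ d x y + d y z) {u : ℕ → X}
    (hu : ∀ n, Precedes d φ (u n) (u (n + 1))) {k n : ℕ} (hkn : k ≤ n) :
    Precedes d φ (u k) (u n) := by
  induction n, hkn using Nat.le_induction with
  | base => simp [Precedes, hrefl]
  | succ n _ ih => exact ih.trans htri (hu n)

theorem isLeftKCauchy_of_precedes_succ (hnn : ∀ x y, 0 ≤ d x y) (hrefl : ∀ x, d x x = 0)
    (htri : ∀ x y z, d x z ≤ d x y + d y z) (hbdd : ∃ M, ∀ x, φ x ≤ M) {u : ℕ → X}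
    (hu : ∀ n, Precedes d φ (u n) (u (n + 1))) : IsLeftKCauchy d u := by
  have hchain : ∀ {k n}, k ≤ n → Precedes d φ (u k) (u n) :=
    precedes_of_precedes_succ hrefl htri hu
  have hmono : Monotone (φ ∘ u) := fun _ _ hkn => (hchain hkn).le hnn
  obtain ⟨M, hM⟩ := hbdd
  have hcauchy : CauchySeq (φ ∘ u) :=
    (tendsto_atTop_ciSup hmono ⟨M, by rintro _ ⟨n, rfl⟩; exact hM _⟩).cauchySeq
  intro ε hε
  obtain ⟨n₀, hn₀⟩ := Metric.cauchySeq_iff.mp hcauchy ε hε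
  refine ⟨n₀, fun k n hk hkn => ?_⟩
  calc d (u k) (u n) ≤ φ (u n) - φ (u k) := hchain hkn
    _ ≤ dist (φ (u n)) (φ (u k)) := le_abs_self _
    _ < ε := hn₀ n (hk.trans hkn) k hk

end QuasiPseudometric

theorem iterate_rel_iterate_succ {α : Type*} {r : α → α → Prop} {f : α → α}
    (hf : ∀ a b, r a b → r (f a) (f b)) {a : α} (ha : r a (f a)) (n : ℕ) :
    r (f^[n] a) (f^[n + 1] a) := by
  induction n with
  | zero => exact ha
  | succ n ih =>
    rw [Function.iterate_succ_apply' f n, Function.iterate_succ_apply' f (n + 1)]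
    exact hf _ _ ih

def coupledMap {X : Type*} (F : X → X → X) (p : X × X) : X × X := (F p.1 p.2, F p.2 p.1)

theorem coupled_fixed_point_general {X : Type*} (d : X → X → ℝ) (φ : X → ℝ)
    (hnn : ∀ x y, 0 ≤ d x y) (hrefl : ∀ x, d x x = 0)
    (htri : ∀ x y z, d x z ≤ d x y + d y z)
    (hHausdorff : ∀ (xs : ℕ → X) (a b : X),
      Tendsto (fun n => d a (xs n)) atTop (nhds 0) →
      Tendsto (fun n => d b (xs n)) atTop (nhds 0) → a = b)
    (hcomplete : ∀ xs : ℕ → X,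
      (∀ ε > (0 : ℝ), ∃ n₀, ∀ k n, n₀ ≤ k → k ≤ n → d (xs k) (xs n) < ε) →
      ∃ a : X, Tendsto (fun n => d a (xs n)) atTop (nhds 0))
    (hbdd : ∃ M : ℝ, ∀ x, φ x ≤ M)
    (F : X → X → X)
    (hpres : ∀ x y z w : X, d x z ≤ φ z - φ x → d y w ≤ φ w - φ y →
      d (F x y) (F z w) ≤ φ (F z w) - φ (F x y))
    (hcont : ∀ (xs ys : ℕ → X) (a b : X),
      Tendsto (fun n => d a (xs n)) atTop (nhds 0) →
      Tendsto (fun n => d b (ys n)) atTop (nhds 0) →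
      Tendsto (fun n => d (F a b) (F (xs n) (ys n))) atTop (nhds 0))
    (x₀ y₀ : X)
    (hx₀ : d x₀ (F x₀ y₀) ≤ φ (F x₀ y₀) - φ x₀)
    (hy₀ : d y₀ (F y₀ x₀) ≤ φ (F y₀ x₀) - φ y₀) :
    ∃ a b : X, F a b = a ∧ F b a = b := by
  set p : ℕ → X × X := fun n => (coupledMap F)^[n] (x₀, y₀)
  have hF : ∀ p q : X × X, Precedes d φ p.1 q.1 ∧ Precedes d φ p.2 q.2 →
      Precedes d φ (coupledMap F p).1 (coupledMap F q).1 ∧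
        Precedes d φ (coupledMap F p).2 (coupledMap F q).2 :=
    fun _ _ h => ⟨hpres _ _ _ _ h.1 h.2, hpres _ _ _ _ h.2 h.1⟩
  have hstep (n : ℕ) : Precedes d φ (p n).1 (p (n + 1)).1 ∧ Precedes d φ (p n).2 (p (n + 1)).2 :=
    iterate_rel_iterate_succ hF (a := (x₀, y₀)) ⟨hx₀, hy₀⟩ n
  obtain ⟨a, ha⟩ := hcomplete _ <|
    isLeftKCauchy_of_precedes_succ hnn hrefl htri hbdd fun n => (hstep n).1
  obtain ⟨b, hb⟩ := hcomplete _ <|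
    isLeftKCauchy_of_precedes_succ hnn hrefl htri hbdd fun n => (hstep n).2
  have hshift := tendsto_add_atTop_nat 1
  refine ⟨a, b, hHausdorff (fun n => (p (n + 1)).1) _ _ ?_ (ha.comp hshift),
    hHausdorff (fun n => (p (n + 1)).2) _ _ ?_ (hb.comp hshift)⟩
  · simpa only [p, Function.iterate_succ_apply', coupledMap] using hcont _ _ a b ha hb
  · simpa only [p, Function.iterate_succ_apply', coupledMap] using hcont _ _ b a hb ha

/-- Theorem 3.4: a preorder-preserving, d-sequentially continuous map
`F : X × X → X` on a Hausdorff left K-complete T₀-quasi-pseudometric space,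
with `x₀ ⪯ F(x₀,y₀)` and `y₀ ⪯ F(y₀,x₀)` for the preorder induced by a
bounded-above `φ`, has a coupled fixed point. -/
theorem coupled_fixed_point {X : Type*} (d : X → X → ℝ) (φ : X → ℝ)
    (hnn : ∀ x y, 0 ≤ d x y) (hrefl : ∀ x, d x x = 0)
    (htri : ∀ x y z, d x z ≤ d x y + d y z)
    (hT0 : ∀ x y, d x y = 0 → d y x = 0 → x = y)
    (hHausdorff : ∀ (xs : ℕ → X) (a b : X),
      Tendsto (fun n => d a (xs n)) atTop (nhds 0) →
      Tendsto (fun n => d b (xs n)) atTop (nhds 0) → a = b)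
    (hcomplete : ∀ xs : ℕ → X,
      (∀ ε > (0 : ℝ), ∃ n₀, ∀ k n, n₀ ≤ k → k ≤ n → d (xs k) (xs n) < ε) →
      ∃ a : X, Tendsto (fun n => d a (xs n)) atTop (nhds 0))
    (hbdd : ∃ M : ℝ, ∀ x, φ x ≤ M)
    (F : X → X → X)
    (hpres : ∀ x y z w : X, d x z ≤ φ z - φ x → d y w ≤ φ w - φ y →
      d (F x y) (F z w) ≤ φ (F z w) - φ (F x y))
    (hcont : ∀ (xs ys : ℕ → X) (a b : X),
      Tendsto (fun n => d a (xs n)) atTop (nhds 0) →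
      Tendsto (fun n => d b (ys n)) atTop (nhds 0) →
      Tendsto (fun n => d (F a b) (F (xs n) (ys n))) atTop (nhds 0))
    (x₀ y₀ : X)
    (hx₀ : d x₀ (F x₀ y₀) ≤ φ (F x₀ y₀) - φ x₀)
    (hy₀ : d y₀ (F y₀ x₀) ≤ φ (F y₀ x₀) - φ y₀) :
    ∃ a b : X, F a b = a ∧ F b a = b :=
  coupled_fixed_point_general d φ hnn hrefl htri hHausdorff hcomplete hbdd F hpres hcont x₀ y₀ hx₀
    hy₀
end

section
/- Let (X,d) be a Hausdorff right K-complete T₀-quasi-pseudometric space, φ : X → ℝ bounded from below, and ⪯ the preorder induced by φ. Let F : X × X → X be preorder-preserving and d⁻¹-sequentially continuous. If there exist x₀, y₀ ∈ X with F(x₀,y₀) ⪯ x₀ and F(y₀,x₀) ⪯ y₀, then F has a coupled fixed point. -/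
open Filter

/-- Corollary 3.6: the right-sided version of the coupled fixed point
theorem, for a Hausdorff right K-complete T₀-quasi-pseudometric space and
`φ` bounded from below. -/
theorem coupled_fixed_point_right {X : Type*} (d : X → X → ℝ) (φ : X → ℝ)
    (hnn : ∀ x y, 0 ≤ d x y) (hrefl : ∀ x, d x x = 0)
    (htri : ∀ x y z, d x z ≤ d x y + d y z)
    (hT0 : ∀ x y, d x y = 0 → d y x = 0 → x = y)
    (hHausdorff : ∀ (xs : ℕ → X) (a b : X),
      Tendsto (fun n => d (xs n) a) atTop (nhds 0) →
      Tendsto (fun n => d (xs n) b) atTop (nhds 0) → a = b)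
    (hcomplete : ∀ xs : ℕ → X,
      (∀ ε > (0 : ℝ), ∃ n₀, ∀ k n, n₀ ≤ k → k ≤ n → d (xs n) (xs k) < ε) →
      ∃ a : X, Tendsto (fun n => d (xs n) a) atTop (nhds 0))
    (hbdd : ∃ M : ℝ, ∀ x, M ≤ φ x)
    (F : X → X → X)
    (hpres : ∀ x y z w : X, d x z ≤ φ z - φ x → d y w ≤ φ w - φ y →
      d (F x y) (F z w) ≤ φ (F z w) - φ (F x y))
    (hcont : ∀ (xs ys : ℕ → X) (a b : X),
      Tendsto (fun n => d (xs n) a) atTop (nhds 0) →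
      Tendsto (fun n => d (ys n) b) atTop (nhds 0) →
      Tendsto (fun n => d (F (xs n) (ys n)) (F a b)) atTop (nhds 0))
    (x₀ y₀ : X)
    (hx₀ : d (F x₀ y₀) x₀ ≤ φ x₀ - φ (F x₀ y₀))
    (hy₀ : d (F y₀ x₀) y₀ ≤ φ y₀ - φ (F y₀ x₀)) :
    ∃ a b : X, F a b = a ∧ F b a = b := by

  obtain ⟨M, hM⟩ := hbdd
  set p : ℕ → X × X := fun n => Nat.rec (x₀, y₀) (fun _ q => (F q.1 q.2, F q.2 q.1)) n with hp
  set x : ℕ → X := fun n => (p n).1 with hx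
  set y : ℕ → X := fun n => (p n).2 with hy
  have hx0 : x 0 = x₀ := rfl
  have hy0 : y 0 = y₀ := rfl
  have hxs : ∀ n, x (n + 1) = F (x n) (y n) := fun n => rfl
  have hys : ∀ n, y (n + 1) = F (y n) (x n) := fun n => rfl
  -- step inequalities
  have key : ∀ n, d (x (n+1)) (x n) ≤ φ (x n) - φ (x (n+1)) ∧
      d (y (n+1)) (y n) ≤ φ (y n) - φ (y (n+1)) := by
    intro n
    induction n with
    | zero => exact ⟨hx₀, hy₀⟩
    | succ n ih =>
      refine ⟨?_, ?_⟩
      · have := hpres (x (n+1)) (y (n+1)) (x n) (y n) ih.1 ih.2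
        simpa [hxs] using this
      · have := hpres (y (n+1)) (x (n+1)) (y n) (x n) ih.2 ih.1
        simpa [hys] using this
  -- telescoping
  have tele : ∀ (s : ℕ → X), (∀ n, d (s (n+1)) (s n) ≤ φ (s n) - φ (s (n+1))) →
      ∀ k m, d (s (k + m)) (s k) ≤ φ (s k) - φ (s (k + m)) := by
    intro s hs k m
    induction m with
    | zero => simp [hrefl]
    | succ m ih =>
      have h1 := htri (s (k + m + 1)) (s (k + m)) (s k)
      have h2 := hs (k + m)
      have : d (s (k + (m+1))) (s k) ≤ (φ (s (k+m)) - φ (s (k+m+1))) + (φ (s k) - φ (s (k+m))) := by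
        calc d (s (k + (m+1))) (s k) ≤ d (s (k+m+1)) (s (k+m)) + d (s (k+m)) (s k) := by
              simpa [Nat.add_assoc] using h1
          _ ≤ _ := add_le_add h2 ih
      simp only [← Nat.add_assoc] at this ⊢
      linarith
  -- convergence machinery for one sequence
  have main : ∀ (s : ℕ → X), (∀ n, d (s (n+1)) (s n) ≤ φ (s n) - φ (s (n+1))) →
      ∃ a : X, Tendsto (fun n => d (s n) a) atTop (nhds 0) := by
    intro s hs
    have hanti : Antitone (fun n => φ (s n)) := by
      apply antitone_nat_of_succ_le
      intro n
      have := hs n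
      have := hnn (s (n+1)) (s n)
      linarith
    have hbb : BddBelow (Set.range fun n => φ (s n)) := ⟨M, by rintro _ ⟨n, rfl⟩; exact hM _⟩
    have hconv : Tendsto (fun n => φ (s n)) atTop (nhds (⨅ n, φ (s n))) :=
      tendsto_atTop_ciInf hanti hbb
    have hcau : CauchySeq (fun n => φ (s n)) := hconv.cauchySeq
    apply hcomplete
    intro ε hε
    obtain ⟨N, hN⟩ := Metric.cauchySeq_iff.1 hcau ε hε
    refine ⟨N, fun k n hk hkn => ?_⟩
    obtain ⟨m, rfl⟩ := Nat.exists_eq_add_of_le hkn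
    have h1 := tele s hs k m
    have h2 := hN (k + m) (le_trans hk (Nat.le_add_right _ _)) k hk
    rw [Real.dist_eq, abs_sub_lt_iff] at h2
    linarith [h2.2]
  obtain ⟨a, ha⟩ := main x (fun n => (key n).1)
  obtain ⟨b, hb⟩ := main y (fun n => (key n).2)
  refine ⟨a, b, ?_, ?_⟩
  · have h1 : Tendsto (fun n => d (x (n+1)) (F a b)) atTop (nhds 0) := hcont x y a b ha hb
    have h2 : Tendsto (fun n => d (x (n+1)) a) atTop (nhds 0) :=
      ha.comp (tendsto_add_atTop_nat 1)
    exact (hHausdorff (fun n => x (n+1)) (F a b) a h1 h2)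
  · have h1 : Tendsto (fun n => d (y (n+1)) (F b a)) atTop (nhds 0) := hcont y x b a hb ha
    have h2 : Tendsto (fun n => d (y (n+1)) b) atTop (nhds 0) :=
      hb.comp (tendsto_add_atTop_nat 1)
    exact (hHausdorff (fun n => y (n+1)) (F b a) b h1 h2)
end

section
/- Let (X,d) be a bicomplete T₀-quasi-pseudometric space (i.e., the metric dˢ(x,y) = max{d(x,y),d(y,x)} is complete), φ : X → ℝ bounded from above, and ⪯̄ the order induced by φ via dˢ: x ⪯̄ y iff dˢ(x,y) ≤ φ(y) − φ(x). Let F : X × X → X be ⪯̄-preserving and dˢ-sequentially continuous. If there exist x₀, y₀ ∈ X with x₀ ⪯̄ F(x₀,y₀) and y₀ ⪯̄ F(y₀,x₀), then F has a coupled fixed point. -/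
/-!
Iterate `(x, y) ↦ (F x y, F y x)` from `(x₀, y₀)`. Since `F` preserves `⪯̄`, both coordinate
sequences are `⪯̄`-chains, so along each of them `dˢ` is dominated by the increments of `φ`.
These increments come from an increasing sequence bounded above, hence both chains are
`dˢ`-Cauchy and converge by bicompleteness, to `a` and `b` say. Continuity of `F` makes
`F a b` another `dˢ`-limit of the first chain, and `dˢ`-limits are unique because `d` is `T₀`.
-/

open Filter Topology

namespace QuasiPseudometric

variable {X : Type*}

def symmDist (d : X → X → ℝ) (x y : X) : ℝ := max (d x y) (d y x)

/-- The order `x ⪯̄ y` induced by `φ` via `dˢ`. -/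
def InducedLE (d : X → X → ℝ) (φ : X → ℝ) (x y : X) : Prop := symmDist d x y ≤ φ y - φ x

variable {d : X → X → ℝ} {φ : X → ℝ}

lemma symmDist_comm (x y : X) : symmDist d x y = symmDist d y x := max_comm _ _

lemma symmDist_self (hrefl : ∀ x, d x x = 0) (x : X) : symmDist d x x = 0 := by
  simp [symmDist, hrefl]

lemma symmDist_nonneg (hrefl : ∀ x, d x x = 0) (htri : ∀ x y z, d x z ≤ d x y + d y z)
    (x y : X) : 0 ≤ symmDist d x y := by
  have hsum := htri x y x
  rw [hrefl] at hsum
  unfold symmDist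
  linarith [le_max_left (d x y) (d y x), le_max_right (d x y) (d y x)]

lemma symmDist_triangle (htri : ∀ x y z, d x z ≤ d x y + d y z) (x y z : X) :
    symmDist d x z ≤ symmDist d x y + symmDist d y z :=
  max_le ((htri x y z).trans (add_le_add (le_max_left _ _) (le_max_left _ _)))
    ((htri z y x).trans_eq (add_comm _ _) |>.trans
      (add_le_add (le_max_right _ _) (le_max_right _ _)))

lemma eq_of_symmDist_nonpos (hrefl : ∀ x, d x x = 0) (htri : ∀ x y z, d x z ≤ d x y + d y z)
    (hT0 : ∀ x y, d x y = 0 → d y x = 0 → x = y) {x y : X} (h : symmDist d x y ≤ 0) :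
    x = y := by
  have hxy := (le_max_left _ _).trans h
  have hyx := (le_max_right _ _).trans h
  have hsum := htri x y x
  rw [hrefl] at hsum
  exact hT0 x y (by linarith) (by linarith)

lemma eq_of_tendsto_symmDist (hrefl : ∀ x, d x x = 0) (htri : ∀ x y z, d x z ≤ d x y + d y z)
    (hT0 : ∀ x y, d x y = 0 → d y x = 0 → x = y) {u : ℕ → X} {a b : X}
    (ha : Tendsto (fun n => symmDist d a (u n)) atTop (𝓝 0))
    (hb : Tendsto (fun n => symmDist d b (u n)) atTop (𝓝 0)) : a = b := by
  refine eq_of_symmDist_nonpos hrefl htri hT0 ?_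
  have hsum : Tendsto (fun n => symmDist d a (u n) + symmDist d b (u n)) atTop (𝓝 0) := by
    simpa using ha.add hb
  refine ge_of_tendsto' hsum fun n => ?_
  rw [symmDist_comm b]
  exact symmDist_triangle htri a (u n) b

namespace InducedLE

lemma refl (hrefl : ∀ x, d x x = 0) (x : X) : InducedLE d φ x x := by
  simp [InducedLE, symmDist_self hrefl]

lemma trans (htri : ∀ x y z, d x z ≤ d x y + d y z) {x y z : X} (hxy : InducedLE d φ x y)
    (hyz : InducedLE d φ y z) : InducedLE d φ x z := by
  unfold InducedLE at *
  linarith [symmDist_triangle htri x y z]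

lemma phi_le (hrefl : ∀ x, d x x = 0) (htri : ∀ x y z, d x z ≤ d x y + d y z) {x y : X}
    (h : InducedLE d φ x y) : φ x ≤ φ y := by
  unfold InducedLE at h
  linarith [symmDist_nonneg hrefl htri x y]

end InducedLE

lemma inducedLE_of_le_of_succ (hrefl : ∀ x, d x x = 0) (htri : ∀ x y z, d x z ≤ d x y + d y z)
    {u : ℕ → X} (hu : ∀ n, InducedLE d φ (u n) (u (n + 1))) {m n : ℕ} (hmn : m ≤ n) :
    InducedLE d φ (u m) (u n) := by
  induction n, hmn using Nat.le_induction with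
  | base => exact .refl hrefl _
  | succ n _ ih => exact ih.trans htri (hu n)

lemma symmDist_cauchy_of_inducedLE_succ (hrefl : ∀ x, d x x = 0)
    (htri : ∀ x y z, d x z ≤ d x y + d y z) (hbdd : ∃ M : ℝ, ∀ x, φ x ≤ M) {u : ℕ → X}
    (hu : ∀ n, InducedLE d φ (u n) (u (n + 1))) :
    ∀ ε > (0 : ℝ), ∃ n₀, ∀ n k, n₀ ≤ n → n₀ ≤ k → symmDist d (u n) (u k) < ε := by
  have hmono : Monotone (φ ∘ u) := monotone_nat_of_le_succ fun n => (hu n).phi_le hrefl htri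
  obtain ⟨M, hM⟩ := hbdd
  have hcauchy : CauchySeq (φ ∘ u) :=
    (tendsto_atTop_ciSup hmono ⟨M, by rintro _ ⟨n, rfl⟩; exact hM _⟩).cauchySeq
  intro ε hε
  obtain ⟨n₀, hn₀⟩ := Metric.cauchySeq_iff.mp hcauchy ε hε
  have hlt : ∀ m n, n₀ ≤ m → n₀ ≤ n → m ≤ n → symmDist d (u m) (u n) < ε := by
    intro m n hm hn hmn
    have hdist := hn₀ n hn m hm
    rw [Real.dist_eq] at hdist
    exact (inducedLE_of_le_of_succ hrefl htri hu hmn).trans_lt ((le_abs_self _).trans_lt hdist)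
  refine ⟨n₀, fun m n hm hn => ?_⟩
  rcases le_total m n with hmn | hnm
  · exact hlt m n hm hn hmn
  · rw [symmDist_comm]
    exact hlt n m hn hm hnm

end QuasiPseudometric

def coupledStep {X : Type*} (F : X → X → X) (p : X × X) : X × X := (F p.1 p.2, F p.2 p.1)

lemma coupledStep_iterate_rel {X : Type*} {F : X → X → X} {r : X → X → Prop}
    (hF : ∀ x y z w, r x z → r y w → r (F x y) (F z w)) {p : X × X}
    (hp : r p.1 (coupledStep F p).1 ∧ r p.2 (coupledStep F p).2) (n : ℕ) :
    r ((coupledStep F)^[n] p).1 ((coupledStep F)^[n + 1] p).1 ∧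
      r ((coupledStep F)^[n] p).2 ((coupledStep F)^[n + 1] p).2 := by
  induction n with
  | zero => exact hp
  | succ n ih =>
    simp only [Function.iterate_succ_apply'] at ih ⊢
    exact ⟨hF _ _ _ _ ih.1 ih.2, hF _ _ _ _ ih.2 ih.1⟩

open QuasiPseudometric

theorem coupled_fixed_point_bicomplete_general {X : Type*} (d : X → X → ℝ) (φ : X → ℝ)
    (hrefl : ∀ x, d x x = 0)
    (htri : ∀ x y z, d x z ≤ d x y + d y z)
    (hT0 : ∀ x y, d x y = 0 → d y x = 0 → x = y)
    (hbicomplete : ∀ xs : ℕ → X,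
      (∀ ε > (0 : ℝ), ∃ n₀, ∀ n k, n₀ ≤ n → n₀ ≤ k →
        max (d (xs n) (xs k)) (d (xs k) (xs n)) < ε) →
      ∃ a : X, Tendsto (fun n => max (d a (xs n)) (d (xs n) a)) atTop (nhds 0))
    (hbdd : ∃ M : ℝ, ∀ x, φ x ≤ M)
    (F : X → X → X)
    (hpres : ∀ x y z w : X,
      max (d x z) (d z x) ≤ φ z - φ x → max (d y w) (d w y) ≤ φ w - φ y →
      max (d (F x y) (F z w)) (d (F z w) (F x y)) ≤ φ (F z w) - φ (F x y))
    (hcont : ∀ (xs ys : ℕ → X) (a b : X),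
      Tendsto (fun n => max (d a (xs n)) (d (xs n) a)) atTop (nhds 0) →
      Tendsto (fun n => max (d b (ys n)) (d (ys n) b)) atTop (nhds 0) →
      Tendsto (fun n => max (d (F a b) (F (xs n) (ys n)))
        (d (F (xs n) (ys n)) (F a b))) atTop (nhds 0))
    (x₀ y₀ : X)
    (hx₀ : max (d x₀ (F x₀ y₀)) (d (F x₀ y₀) x₀) ≤ φ (F x₀ y₀) - φ x₀)
    (hy₀ : max (d y₀ (F y₀ x₀)) (d (F y₀ x₀) y₀) ≤ φ (F y₀ x₀) - φ y₀) :
    ∃ a b : X, F a b = a ∧ F b a = b := by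
  set u : ℕ → X × X := fun n => (coupledStep F)^[n] (x₀, y₀)
  have hchain := coupledStep_iterate_rel (r := InducedLE d φ) hpres (p := (x₀, y₀)) ⟨hx₀, hy₀⟩
  obtain ⟨a, ha⟩ := hbicomplete (fun n => (u n).1)
    (symmDist_cauchy_of_inducedLE_succ hrefl htri hbdd fun n => (hchain n).1)
  obtain ⟨b, hb⟩ := hbicomplete (fun n => (u n).2)
    (symmDist_cauchy_of_inducedLE_succ hrefl htri hbdd fun n => (hchain n).2)
  have hnext (n : ℕ) : u (n + 1) = coupledStep F (u n) := Function.iterate_succ_apply' _ _ _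
  refine ⟨a, b, ?_, ?_⟩
  · refine eq_of_tendsto_symmDist hrefl htri hT0 (u := fun n => (u (n + 1)).1) ?_
      (ha.comp (tendsto_add_atTop_nat 1))
    simp only [hnext]
    exact hcont _ _ a b ha hb
  · refine eq_of_tendsto_symmDist hrefl htri hT0 (u := fun n => (u (n + 1)).2) ?_
      (hb.comp (tendsto_add_atTop_nat 1))
    simp only [hnext]
    exact hcont _ _ b a hb ha

/-- Corollary 3.7: the symmetrized (bicomplete) version of the coupled fixed
point theorem, with the order induced by `φ` via `dˢ x y = max (d x y) (d y x)`. -/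
theorem coupled_fixed_point_bicomplete {X : Type*} (d : X → X → ℝ) (φ : X → ℝ)
    (hnn : ∀ x y, 0 ≤ d x y) (hrefl : ∀ x, d x x = 0)
    (htri : ∀ x y z, d x z ≤ d x y + d y z)
    (hT0 : ∀ x y, d x y = 0 → d y x = 0 → x = y)
    (hbicomplete : ∀ xs : ℕ → X,
      (∀ ε > (0 : ℝ), ∃ n₀, ∀ n k, n₀ ≤ n → n₀ ≤ k →
        max (d (xs n) (xs k)) (d (xs k) (xs n)) < ε) →
      ∃ a : X, Tendsto (fun n => max (d a (xs n)) (d (xs n) a)) atTop (nhds 0))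
    (hbdd : ∃ M : ℝ, ∀ x, φ x ≤ M)
    (F : X → X → X)
    (hpres : ∀ x y z w : X,
      max (d x z) (d z x) ≤ φ z - φ x → max (d y w) (d w y) ≤ φ w - φ y →
      max (d (F x y) (F z w)) (d (F z w) (F x y)) ≤ φ (F z w) - φ (F x y))
    (hcont : ∀ (xs ys : ℕ → X) (a b : X),
      Tendsto (fun n => max (d a (xs n)) (d (xs n) a)) atTop (nhds 0) →
      Tendsto (fun n => max (d b (ys n)) (d (ys n) b)) atTop (nhds 0) →
      Tendsto (fun n => max (d (F a b) (F (xs n) (ys n)))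
        (d (F (xs n) (ys n)) (F a b))) atTop (nhds 0))
    (x₀ y₀ : X)
    (hx₀ : max (d x₀ (F x₀ y₀)) (d (F x₀ y₀) x₀) ≤ φ (F x₀ y₀) - φ x₀)
    (hy₀ : max (d y₀ (F y₀ x₀)) (d (F y₀ x₀) y₀) ≤ φ (F y₀ x₀) - φ y₀) :
    ∃ a b : X, F a b = a ∧ F b a = b :=
  coupled_fixed_point_bicomplete_general d φ hrefl htri hT0 hbicomplete hbdd F hpres hcont x₀ y₀ hx₀
    hy₀
end

section
/- Let (X,⪯) be a preordered set, F : X × X → X, G : X → X, and suppose the pair {F,G} is weakly left-related. Given x₀, y₀ ∈ X with x₀ ⪯ F(x₀,y₀) and y₀ ⪯ F(y₀,x₀), define sequences by x_{2n+1} = F(x_{2n}, y_{2n}), x_{2n+2} = G x_{2n+1}, y_{2n+1} = F(y_{2n}, x_{2n}), y_{2n+2} = G y_{2n+1}. Then xₙ ⪯ xₙ₊₁ and yₙ ⪯ yₙ₊₁ for all n ≥ 0. -/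
/-- For a weakly left-related pair `{F, G}` on a preordered set, the sequences
`x_{2n+1} = F(x_{2n}, y_{2n})`, `x_{2n+2} = G x_{2n+1}` (and symmetrically for
`y`) are nondecreasing, provided `x₀ ⪯ F(x₀,y₀)` and `y₀ ⪯ F(y₀,x₀)`. -/
theorem weakly_left_related_monotone_seq {X : Type*} (r : X → X → Prop)
    (hrefl : ∀ x, r x x) (htrans : ∀ x y z, r x y → r y z → r x z)
    (F : X → X → X) (G : X → X)
    (hC1 : ∀ x y : X, r (F x y) (G (F x y)) ∧ r (G x) (F (G x) (G y)))
    (hC2 : ∀ x y : X, r (F y x) (G (F y x)) ∧ r (G y) (F (G y) (G x)))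
    (x y : ℕ → X)
    (hx₀ : r (x 0) (F (x 0) (y 0))) (hy₀ : r (y 0) (F (y 0) (x 0)))
    (hx₁ : ∀ n, x (2 * n + 1) = F (x (2 * n)) (y (2 * n)))
    (hx₂ : ∀ n, x (2 * n + 2) = G (x (2 * n + 1)))
    (hy₁ : ∀ n, y (2 * n + 1) = F (y (2 * n)) (x (2 * n)))
    (hy₂ : ∀ n, y (2 * n + 2) = G (y (2 * n + 1))) :
    ∀ n : ℕ, r (x n) (x (n + 1)) ∧ r (y n) (y (n + 1)) := by
  intro n
  rcases Nat.even_or_odd n with ⟨m, hm⟩ | ⟨k, hk⟩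
  case inl =>
    match m, hm with
    | 0, hm =>
      have hn : n = 0 := by omega
      subst hn
      have h1 := hx₁ 0
      have h2 := hy₁ 0
      simp only [Nat.mul_zero, Nat.zero_add] at h1 h2
      rw [show (0:ℕ)+1 = 1 from rfl, h1, h2]
      exact ⟨hx₀, hy₀⟩
    | k + 1, hm =>
      have hm' : n = 2 * k + 2 := by omega
      subst hm'
      have hx3 : x (2 * k + 2 + 1) = F (x (2 * k + 2)) (y (2 * k + 2)) := by
        have := hx₁ (k + 1); rw [show 2 * (k + 1) = 2 * k + 2 by ring] at this
        exact this
      have hy3 : y (2 * k + 2 + 1) = F (y (2 * k + 2)) (x (2 * k + 2)) := by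
        have := hy₁ (k + 1); rw [show 2 * (k + 1) = 2 * k + 2 by ring] at this
        exact this
      constructor
      · rw [hx3, hx₂ k, hy₂ k]
        exact (hC1 _ _).2
      · rw [hy3, hy₂ k, hx₂ k]
        exact (hC2 _ _).2
  case inr =>
    have hn : n = 2 * k + 1 := by omega
    subst hn
    constructor
    · rw [hx₂ k, hx₁ k]
      exact (hC1 _ _).1
    · rw [hy₂ k, hy₁ k]
      exact (hC2 _ _).1
end

section
/- Let (X,d) be a Hausdorff left K-complete T₀-quasi-pseudometric space, φ : X → ℝ bounded from above, and ⪯ the preorder induced by φ. Let F : X × X → X and G : X → X be d-sequentially continuous maps such that the pair {F,G} is weakly left-related. If there exist x₀, y₀ ∈ X with x₀ ⪯ F(x₀,y₀) and y₀ ⪯ F(y₀,x₀), then F and G have a common coupled fixed point: there are x*, y* ∈ X with F(x*,y*) = G x* = x* and F(y*,x*) = G y* = y*. -/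
open Filter

theorem aux_limit_of_chain {X : Type*} (d : X → X → ℝ) (φ : X → ℝ)
    (hnn : ∀ x y, 0 ≤ d x y) (hrefl : ∀ x, d x x = 0)
    (htri : ∀ x y z, d x z ≤ d x y + d y z)
    (hcomplete : ∀ xs : ℕ → X,
      (∀ ε > (0 : ℝ), ∃ n₀, ∀ k n, n₀ ≤ k → k ≤ n → d (xs k) (xs n) < ε) →
      ∃ a : X, Tendsto (fun n => d a (xs n)) atTop (nhds 0))
    (M : ℝ) (hM : ∀ x, φ x ≤ M)
    (s : ℕ → X) (hs : ∀ n, d (s n) (s (n + 1)) ≤ φ (s (n + 1)) - φ (s n)) :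
    ∃ a : X, Tendsto (fun n => d a (s n)) atTop (nhds 0) := by
  have hmono : Monotone fun n => φ (s n) :=
    monotone_nat_of_le_succ fun n => by linarith [hnn (s n) (s (n + 1)), hs n]
  have hchain : ∀ k n, k ≤ n → d (s k) (s n) ≤ φ (s n) - φ (s k) := by
    intro k n hkn
    induction n, hkn using Nat.le_induction with
    | base => simp [hrefl]
    | succ n hkn ih =>
      calc d (s k) (s (n + 1)) ≤ d (s k) (s n) + d (s n) (s (n + 1)) := htri _ _ _
        _ ≤ φ (s (n + 1)) - φ (s k) := by linarith [hs n]
  apply hcomplete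
  intro ε hε
  have hbdd' : BddAbove (Set.range fun n => φ (s n)) :=
    ⟨M, by rintro _ ⟨n, rfl⟩; exact hM _⟩
  set L := ⨆ n, φ (s n) with hL
  have hle : ∀ n, φ (s n) ≤ L := fun n => le_ciSup hbdd' n
  obtain ⟨n₀, hn₀⟩ : ∃ n₀, L - ε < φ (s n₀) :=
    exists_lt_of_lt_ciSup (show L - ε < L by linarith [hle 0, hε])
  refine ⟨n₀, fun k n hk hkn => ?_⟩
  have h1 := hchain k n hkn
  have h2 := hmono hk
  have h3 := hle n
  linarith

/-- Theorem 4.3: a weakly left-related pair `{F, G}` of d-sequentially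
continuous maps on a Hausdorff left K-complete T₀-quasi-pseudometric space,
with `x₀ ⪯ F(x₀,y₀)` and `y₀ ⪯ F(y₀,x₀)` for the preorder induced by a
bounded-above `φ`, has a common coupled fixed point. -/
theorem common_coupled_fixed_point_two_maps {X : Type*} (d : X → X → ℝ) (φ : X → ℝ)
    (hnn : ∀ x y, 0 ≤ d x y) (hrefl : ∀ x, d x x = 0)
    (htri : ∀ x y z, d x z ≤ d x y + d y z)
    (hT0 : ∀ x y, d x y = 0 → d y x = 0 → x = y)
    (hHausdorff : ∀ (xs : ℕ → X) (a b : X),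
      Tendsto (fun n => d a (xs n)) atTop (nhds 0) →
      Tendsto (fun n => d b (xs n)) atTop (nhds 0) → a = b)
    (hcomplete : ∀ xs : ℕ → X,
      (∀ ε > (0 : ℝ), ∃ n₀, ∀ k n, n₀ ≤ k → k ≤ n → d (xs k) (xs n) < ε) →
      ∃ a : X, Tendsto (fun n => d a (xs n)) atTop (nhds 0))
    (hbdd : ∃ M : ℝ, ∀ x, φ x ≤ M)
    (F : X → X → X) (G : X → X)
    (hFcont : ∀ (xs ys : ℕ → X) (a b : X),
      Tendsto (fun n => d a (xs n)) atTop (nhds 0) →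
      Tendsto (fun n => d b (ys n)) atTop (nhds 0) →
      Tendsto (fun n => d (F a b) (F (xs n) (ys n))) atTop (nhds 0))
    (hGcont : ∀ (xs : ℕ → X) (a : X),
      Tendsto (fun n => d a (xs n)) atTop (nhds 0) →
      Tendsto (fun n => d (G a) (G (xs n))) atTop (nhds 0))
    (hC1 : ∀ x y : X,
      (d (F x y) (G (F x y)) ≤ φ (G (F x y)) - φ (F x y)) ∧
      (d (G x) (F (G x) (G y)) ≤ φ (F (G x) (G y)) - φ (G x)))
    (hC2 : ∀ x y : X,
      (d (F y x) (G (F y x)) ≤ φ (G (F y x)) - φ (F y x)) ∧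
      (d (G y) (F (G y) (G x)) ≤ φ (F (G y) (G x)) - φ (G y)))
    (x₀ y₀ : X)
    (hx₀ : d x₀ (F x₀ y₀) ≤ φ (F x₀ y₀) - φ x₀)
    (hy₀ : d y₀ (F y₀ x₀) ≤ φ (F y₀ x₀) - φ y₀) :
    ∃ a b : X, F a b = a ∧ G a = a ∧ F b a = b ∧ G b = b := by
  classical
  obtain ⟨M, hM⟩ := hbdd
  -- the alternating Picard sequence of pairs
  obtain ⟨p, hp0, hpsucc⟩ : ∃ p : ℕ → X × X, p 0 = (x₀, y₀) ∧ ∀ m, p (m + 1) =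
      if Even m then (F (p m).1 (p m).2, F (p m).2 (p m).1) else (G (p m).1, G (p m).2) :=
    ⟨fun n => Nat.rec (x₀, y₀)
      (fun m q => if Even m then (F q.1 q.2, F q.2 q.1) else (G q.1, G q.2)) n,
     rfl, fun m => rfl⟩
  have hpeven : ∀ m, Even m → p (m + 1) = (F (p m).1 (p m).2, F (p m).2 (p m).1) := by
    intro m hm; rw [hpsucc, if_pos hm]
  have hpodd : ∀ m, ¬ Even m → p (m + 1) = (G (p m).1, G (p m).2) := by
    intro m hm; rw [hpsucc, if_neg hm]
  -- the key chain inequalities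
  have key : ∀ n, (d (p n).1 (p (n + 1)).1 ≤ φ (p (n + 1)).1 - φ (p n).1) ∧
      (d (p n).2 (p (n + 1)).2 ≤ φ (p (n + 1)).2 - φ (p n).2) := by
    intro n
    match n with
    | 0 =>
      have h : p (0 + 1) = (F (p 0).1 (p 0).2, F (p 0).2 (p 0).1) := hpeven 0 (by decide)
      rw [h, hp0]
      exact ⟨hx₀, hy₀⟩
    | (m + 1) =>
      rcases Nat.even_or_odd m with hm | hm
      · have h1 : p (m + 1) = (F (p m).1 (p m).2, F (p m).2 (p m).1) := hpeven m hm
        have h2 : p (m + 2) = (G (p (m + 1)).1, G (p (m + 1)).2) :=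
          hpodd (m + 1) (by simp [Nat.even_add_one, hm])
        rw [h2, h1]
        exact ⟨(hC1 (p m).1 (p m).2).1, (hC2 (p m).1 (p m).2).1⟩
      · have hm' : ¬ Even m := Nat.not_even_iff_odd.mpr hm
        have h1 : p (m + 1) = (G (p m).1, G (p m).2) := hpodd m hm'
        have h2 : p (m + 2) = (F (p (m + 1)).1 (p (m + 1)).2, F (p (m + 1)).2 (p (m + 1)).1) :=
          hpeven (m + 1) (by simp [Nat.even_add_one, hm'])
        rw [h2, h1]
        exact ⟨(hC1 (p m).1 (p m).2).2, (hC2 (p m).1 (p m).2).2⟩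
  obtain ⟨a, ha⟩ := aux_limit_of_chain d φ hnn hrefl htri hcomplete M hM
    (fun n => (p n).1) (fun n => (key n).1)
  obtain ⟨b, hb⟩ := aux_limit_of_chain d φ hnn hrefl htri hcomplete M hM
    (fun n => (p n).2) (fun n => (key n).2)
  -- subsequence machinery
  have h2n : Tendsto (fun n => 2 * n) atTop atTop :=
    tendsto_atTop_mono (fun n => by simp only [id_eq]; omega) tendsto_id
  have h2n1 : Tendsto (fun n => 2 * n + 1) atTop atTop :=
    tendsto_atTop_mono (fun n => by simp only [id_eq]; omega) tendsto_id
  have h2n2 : Tendsto (fun n => 2 * n + 2) atTop atTop :=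
    tendsto_atTop_mono (fun n => by simp only [id_eq]; omega) tendsto_id
  have ha0 : Tendsto (fun n => d a (p (2 * n)).1) atTop (nhds 0) := ha.comp h2n
  have hb0 : Tendsto (fun n => d b (p (2 * n)).2) atTop (nhds 0) := hb.comp h2n
  have ha1 : Tendsto (fun n => d a (p (2 * n + 1)).1) atTop (nhds 0) := ha.comp h2n1
  have hb1 : Tendsto (fun n => d b (p (2 * n + 1)).2) atTop (nhds 0) := hb.comp h2n1
  have ha2 : Tendsto (fun n => d a (p (2 * n + 2)).1) atTop (nhds 0) := ha.comp h2n2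
  have hb2 : Tendsto (fun n => d b (p (2 * n + 2)).2) atTop (nhds 0) := hb.comp h2n2
  have heven : ∀ n : ℕ, p (2 * n + 1) = (F (p (2 * n)).1 (p (2 * n)).2, F (p (2 * n)).2 (p (2 * n)).1) :=
    fun n => hpeven _ (even_two_mul n)
  have hodd : ∀ n : ℕ, p (2 * n + 2) = (G (p (2 * n + 1)).1, G (p (2 * n + 1)).2) :=
    fun n => hpodd _ (by simp [Nat.even_add_one, even_two_mul])
  -- F a b = a
  have hFa : Tendsto (fun n => d (F a b) (p (2 * n + 1)).1) atTop (nhds 0) := by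
    have := hFcont (fun n => (p (2 * n)).1) (fun n => (p (2 * n)).2) a b ha0 hb0
    refine this.congr fun n => ?_
    rw [heven n]
  have hFab : F a b = a := hHausdorff (fun n => (p (2 * n + 1)).1) _ _ hFa ha1
  -- G a = a
  have hGa' : Tendsto (fun n => d (G a) (p (2 * n + 2)).1) atTop (nhds 0) := by
    have := hGcont (fun n => (p (2 * n + 1)).1) a ha1
    refine this.congr fun n => ?_
    rw [hodd n]
  have hGa : G a = a := hHausdorff (fun n => (p (2 * n + 2)).1) _ _ hGa' ha2
  -- F b a = b
  have hFb : Tendsto (fun n => d (F b a) (p (2 * n + 1)).2) atTop (nhds 0) := by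
    have := hFcont (fun n => (p (2 * n)).2) (fun n => (p (2 * n)).1) b a hb0 ha0
    refine this.congr fun n => ?_
    rw [heven n]
  have hFba : F b a = b := hHausdorff (fun n => (p (2 * n + 1)).2) _ _ hFb hb1
  -- G b = b
  have hGb' : Tendsto (fun n => d (G b) (p (2 * n + 2)).2) atTop (nhds 0) := by
    have := hGcont (fun n => (p (2 * n + 1)).2) b hb1
    refine this.congr fun n => ?_
    rw [hodd n]
  have hGb : G b = b := hHausdorff (fun n => (p (2 * n + 2)).2) _ _ hGb' hb2
  exact ⟨a, b, hFab, hGa, hFba, hGb⟩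
end

section
/- Let (X,d) be a Hausdorff right K-complete T₀-quasi-pseudometric space, φ : X → ℝ bounded from below, and ⪯ the preorder induced by φ. Let F : X × X → X and G : X → X be d⁻¹-sequentially continuous maps such that the pair {F,G} is weakly right-related. If there exist x₀, y₀ ∈ X with F(x₀,y₀) ⪯ x₀ and F(y₀,x₀) ⪯ y₀, then F and G have a common coupled fixed point. -/
open Filter

/-- Corollary 4.5: the right-sided version of the common coupled fixed point
theorem for a weakly right-related pair `{F, G}`. -/
theorem common_coupled_fixed_point_two_maps_right {X : Type*} (d : X → X → ℝ) (φ : X → ℝ)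
    (hnn : ∀ x y, 0 ≤ d x y) (hrefl : ∀ x, d x x = 0)
    (htri : ∀ x y z, d x z ≤ d x y + d y z)
    (hT0 : ∀ x y, d x y = 0 → d y x = 0 → x = y)
    (hHausdorff : ∀ (xs : ℕ → X) (a b : X),
      Tendsto (fun n => d (xs n) a) atTop (nhds 0) →
      Tendsto (fun n => d (xs n) b) atTop (nhds 0) → a = b)
    (hcomplete : ∀ xs : ℕ → X,
      (∀ ε > (0 : ℝ), ∃ n₀, ∀ k n, n₀ ≤ k → k ≤ n → d (xs n) (xs k) < ε) →
      ∃ a : X, Tendsto (fun n => d (xs n) a) atTop (nhds 0))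
    (hbdd : ∃ M : ℝ, ∀ x, M ≤ φ x)
    (F : X → X → X) (G : X → X)
    (hFcont : ∀ (xs ys : ℕ → X) (a b : X),
      Tendsto (fun n => d (xs n) a) atTop (nhds 0) →
      Tendsto (fun n => d (ys n) b) atTop (nhds 0) →
      Tendsto (fun n => d (F (xs n) (ys n)) (F a b)) atTop (nhds 0))
    (hGcont : ∀ (xs : ℕ → X) (a : X),
      Tendsto (fun n => d (xs n) a) atTop (nhds 0) →
      Tendsto (fun n => d (G (xs n)) (G a)) atTop (nhds 0))
    (hD1 : ∀ x y : X,
      (d (G (F x y)) (F x y) ≤ φ (F x y) - φ (G (F x y))) ∧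
      (d (F (G x) (G y)) (G x) ≤ φ (G x) - φ (F (G x) (G y))))
    (hD2 : ∀ x y : X,
      (d (G (F y x)) (F y x) ≤ φ (F y x) - φ (G (F y x))) ∧
      (d (F (G y) (G x)) (G y) ≤ φ (G y) - φ (F (G y) (G x))))
    (x₀ y₀ : X)
    (hx₀ : d (F x₀ y₀) x₀ ≤ φ x₀ - φ (F x₀ y₀))
    (hy₀ : d (F y₀ x₀) y₀ ≤ φ y₀ - φ (F y₀ x₀)) :
    ∃ a b : X, F a b = a ∧ G a = a ∧ F b a = b ∧ G b = b := by
  classical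
  obtain ⟨M, hM⟩ := hbdd
  set s : ℕ → X × X := fun n => Nat.rec (x₀, y₀)
    (fun n p => if n % 2 = 0 then (F p.1 p.2, F p.2 p.1) else (G p.1, G p.2)) n with hs
  have hs0 : s 0 = (x₀, y₀) := rfl
  have hsucc : ∀ n, s (n+1) = if n % 2 = 0 then (F (s n).1 (s n).2, F (s n).2 (s n).1)
      else (G (s n).1, G (s n).2) := fun n => rfl
  set xs : ℕ → X := fun n => (s n).1 with hxs
  set ys : ℕ → X := fun n => (s n).2 with hys
  have key : ∀ n, d (xs (n+1)) (xs n) ≤ φ (xs n) - φ (xs (n+1)) ∧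
      d (ys (n+1)) (ys n) ≤ φ (ys n) - φ (ys (n+1)) := by
    intro n
    match n with
    | 0 =>
      have h1 : s (0+1) = (F x₀ y₀, F y₀ x₀) := by rw [hsucc 0, if_pos rfl, hs0]
      simp only [hxs, hys, hs0, h1]
      exact ⟨hx₀, hy₀⟩
    | (m+1) =>
      rcases Nat.even_or_odd m with he | ho
      · have hm : m % 2 = 0 := Nat.even_iff.mp he
        have h1 : s (m+1) = (F (s m).1 (s m).2, F (s m).2 (s m).1) := by
          rw [hsucc m, if_pos hm]
        have h2 : s (m+1+1) = (G (s (m+1)).1, G (s (m+1)).2) := by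
          rw [hsucc (m+1), if_neg (by omega)]
        simp only [hxs, hys, h2, h1]
        exact ⟨(hD1 (s m).1 (s m).2).1, (hD2 (s m).1 (s m).2).1⟩
      · have hm : m % 2 = 1 := Nat.odd_iff.mp ho
        have h1 : s (m+1) = (G (s m).1, G (s m).2) := by
          rw [hsucc m, if_neg (by omega)]
        have h2 : s (m+1+1) = (F (s (m+1)).1 (s (m+1)).2, F (s (m+1)).2 (s (m+1)).1) := by
          rw [hsucc (m+1), if_pos (by omega)]
        simp only [hxs, hys, h2, h1]
        exact ⟨(hD1 (s m).1 (s m).2).2, (hD2 (s m).1 (s m).2).2⟩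
  -- telescoping estimate
  have tele : ∀ (zs : ℕ → X),
      (∀ n, d (zs (n+1)) (zs n) ≤ φ (zs n) - φ (zs (n+1))) →
      ∀ k n, k ≤ n → d (zs n) (zs k) ≤ φ (zs k) - φ (zs n) := by
    intro zs hz k n hkn
    induction n, hkn using Nat.le_induction with
    | base => simp [hrefl]
    | succ n hkn ih =>
      have := htri (zs (n+1)) (zs n) (zs k)
      have h1 := hz n
      linarith
  -- convergence of each sequence
  have conv : ∀ (zs : ℕ → X),
      (∀ n, d (zs (n+1)) (zs n) ≤ φ (zs n) - φ (zs (n+1))) →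
      ∃ a : X, Tendsto (fun n => d (zs n) a) atTop (nhds 0) := by
    intro zs hz
    apply hcomplete
    intro ε hε
    have hanti : Antitone (fun n => φ (zs n)) := by
      apply antitone_nat_of_succ_le
      intro n
      have := hz n
      have := hnn (zs (n+1)) (zs n)
      linarith
    have hbb : BddBelow (Set.range fun n => φ (zs n)) := ⟨M, by rintro _ ⟨n, rfl⟩; exact hM _⟩
    have htend := tendsto_atTop_ciInf hanti hbb
    set L := ⨅ n, φ (zs n) with hL
    have hLle : ∀ n, L ≤ φ (zs n) := fun n => ciInf_le hbb n
    obtain ⟨N, hN⟩ := Metric.tendsto_atTop.mp htend ε hε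
    refine ⟨N, fun k n hk hkn => ?_⟩
    have h1 := tele zs hz k n hkn
    have h2 := hN k hk
    rw [Real.dist_eq, abs_lt] at h2
    have := hLle n
    linarith
  obtain ⟨a, ha⟩ := conv xs (fun n => (key n).1)
  obtain ⟨b, hb⟩ := conv ys (fun n => (key n).2)
  -- subsequence facts
  have h2e : Tendsto (fun n : ℕ => 2*n) atTop atTop :=
    tendsto_atTop_atTop.mpr fun c => ⟨c, fun a ha => by omega⟩
  have h2o : Tendsto (fun n : ℕ => 2*n+1) atTop atTop :=
    tendsto_atTop_atTop.mpr fun c => ⟨c, fun a ha => by omega⟩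
  have h2oo : Tendsto (fun n : ℕ => 2*n+2) atTop atTop :=
    tendsto_atTop_atTop.mpr fun c => ⟨c, fun a ha => by omega⟩
  have hae : Tendsto (fun n => d (xs (2*n)) a) atTop (nhds 0) := ha.comp h2e
  have hbe : Tendsto (fun n => d (ys (2*n)) b) atTop (nhds 0) := hb.comp h2e
  have hao : Tendsto (fun n => d (xs (2*n+1)) a) atTop (nhds 0) := ha.comp h2o
  have hbo : Tendsto (fun n => d (ys (2*n+1)) b) atTop (nhds 0) := hb.comp h2o
  have haoo : Tendsto (fun n => d (xs (2*n+2)) a) atTop (nhds 0) := ha.comp h2oo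
  have hboo : Tendsto (fun n => d (ys (2*n+2)) b) atTop (nhds 0) := hb.comp h2oo
  have hxodd : ∀ n, xs (2*n+1) = F (xs (2*n)) (ys (2*n)) := by
    intro n; simp only [hxs, hys, hsucc (2*n), if_pos (by omega : (2*n) % 2 = 0)]
  have hyodd : ∀ n, ys (2*n+1) = F (ys (2*n)) (xs (2*n)) := by
    intro n; simp only [hxs, hys, hsucc (2*n), if_pos (by omega : (2*n) % 2 = 0)]
  have hxev : ∀ n, xs (2*n+2) = G (xs (2*n+1)) := by
    intro n; simp only [hxs, hsucc (2*n+1), if_neg (by omega : ¬ (2*n+1) % 2 = 0)]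
  have hyev : ∀ n, ys (2*n+2) = G (ys (2*n+1)) := by
    intro n; simp only [hys, hsucc (2*n+1), if_neg (by omega : ¬ (2*n+1) % 2 = 0)]
  have hFab : F a b = a := by
    refine hHausdorff (fun n => xs (2*n+1)) (F a b) a ?_ hao
    have := hFcont (fun n => xs (2*n)) (fun n => ys (2*n)) a b hae hbe
    simpa only [hxodd] using this
  have hFba : F b a = b := by
    refine hHausdorff (fun n => ys (2*n+1)) (F b a) b ?_ hbo
    have := hFcont (fun n => ys (2*n)) (fun n => xs (2*n)) b a hbe hae
    simpa only [hyodd] using this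
  have hGa : G a = a := by
    refine hHausdorff (fun n => xs (2*n+2)) (G a) a ?_ haoo
    have := hGcont (fun n => xs (2*n+1)) a hao
    simpa only [hxev] using this
  have hGb : G b = b := by
    refine hHausdorff (fun n => ys (2*n+2)) (G b) b ?_ hboo
    have := hGcont (fun n => ys (2*n+1)) b hbo
    simpa only [hyev] using this
  exact ⟨a, b, hFab, hGa, hFba, hGb⟩
end

section
/- Let (X,d) be a Hausdorff left K-complete T₀-quasi-pseudometric space, φ : X → ℝ bounded from above, and ⪯ the preorder induced by φ. Let T : X → X be preorder-preserving and d-sequentially continuous, and suppose there exists x₀ ∈ X with x₀ ⪯ T x₀. Then T has a fixed point. -/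
open Filter

/-- Single-map specialization of Theorem 3.4: a preorder-preserving,
d-sequentially continuous `T : X → X` on a Hausdorff left K-complete
T₀-quasi-pseudometric space with `x₀ ⪯ T x₀` for the preorder induced by a
bounded-above `φ` has a fixed point. -/
theorem single_map_fixed_point {X : Type*} (d : X → X → ℝ) (φ : X → ℝ)
    (hnn : ∀ x y, 0 ≤ d x y) (hrefl : ∀ x, d x x = 0)
    (htri : ∀ x y z, d x z ≤ d x y + d y z)
    (hT0 : ∀ x y, d x y = 0 → d y x = 0 → x = y)
    (hHausdorff : ∀ (xs : ℕ → X) (a b : X),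
      Tendsto (fun n => d a (xs n)) atTop (nhds 0) →
      Tendsto (fun n => d b (xs n)) atTop (nhds 0) → a = b)
    (hcomplete : ∀ xs : ℕ → X,
      (∀ ε > (0 : ℝ), ∃ n₀, ∀ k n, n₀ ≤ k → k ≤ n → d (xs k) (xs n) < ε) →
      ∃ a : X, Tendsto (fun n => d a (xs n)) atTop (nhds 0))
    (hbdd : ∃ M : ℝ, ∀ x, φ x ≤ M)
    (T : X → X)
    (hpres : ∀ x y : X, d x y ≤ φ y - φ x → d (T x) (T y) ≤ φ (T y) - φ (T x))
    (hcont : ∀ (xs : ℕ → X) (a : X),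
      Tendsto (fun n => d a (xs n)) atTop (nhds 0) →
      Tendsto (fun n => d (T a) (T (xs n))) atTop (nhds 0))
    (x₀ : X) (hx₀ : d x₀ (T x₀) ≤ φ (T x₀) - φ x₀) :
    ∃ a : X, T a = a := by
  classical
  set xs : ℕ → X := fun n => T^[n] x₀ with hxs
  have hstep : ∀ n, d (xs n) (xs (n+1)) ≤ φ (xs (n+1)) - φ (xs n) := by
    intro n
    induction n with
    | zero => simpa [xs] using hx₀
    | succ n ih =>
      have := hpres _ _ ih
      simpa [xs, Function.iterate_succ_apply'] using this
  have hchain : ∀ k n, k ≤ n → d (xs k) (xs n) ≤ φ (xs n) - φ (xs k) := by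
    intro k n hkn
    induction n with
    | zero =>
      have : k = 0 := Nat.le_zero.mp hkn
      subst this; simp [hrefl]
    | succ n ih =>
      rcases Nat.lt_or_ge k (n+1) with h | h
      · have hk : k ≤ n := Nat.lt_succ_iff.mp h
        have := htri (xs k) (xs n) (xs (n+1))
        have := this.trans (add_le_add (ih hk) (hstep n))
        linarith
      · have : k = n+1 := le_antisymm hkn h
        subst this; simp [hrefl]
  have hmono : Monotone (fun n => φ (xs n)) := by
    intro k n hkn
    have h1 := hchain k n hkn
    have h2 := hnn (xs k) (xs n)
    simp only
    linarith
  obtain ⟨M, hM⟩ := hbdd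
  have hb : BddAbove (Set.range fun n => φ (xs n)) := ⟨M, by rintro y ⟨n, rfl⟩; exact hM _⟩
  have htend := tendsto_atTop_ciSup hmono hb
  have hcauchy := htend.cauchySeq
  have hKC : ∀ ε > (0:ℝ), ∃ n₀, ∀ k n, n₀ ≤ k → k ≤ n → d (xs k) (xs n) < ε := by
    intro ε hε
    rcases Metric.cauchySeq_iff.mp hcauchy ε hε with ⟨N, hN⟩
    refine ⟨N, fun k n hk hkn => ?_⟩
    have h1 := hchain k n hkn
    have h2 := hN n (hk.trans hkn) k hk
    rw [Real.dist_eq] at h2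
    have := abs_lt.mp h2
    linarith [this.1, this.2]
  obtain ⟨a, ha⟩ := hcomplete xs hKC
  have ha' : Tendsto (fun n => d a (xs (n+1))) atTop (nhds 0) :=
    ha.comp (tendsto_add_atTop_nat 1)
  have hTa : Tendsto (fun n => d (T a) (xs (n+1))) atTop (nhds 0) := by
    have := hcont xs a ha
    simpa [xs, Function.iterate_succ_apply'] using this
  exact ⟨a, hHausdorff (fun n => xs (n+1)) (T a) a hTa ha'⟩
end
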